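/- arXiv:2601.05408 — 2 statements merged into one kernel-verified Lean document; each statement's English description precedes it below -/
import Mathlib

section
/- Let u_i(t) = Σ_{j≠i} p_{ij} sin(ω_{ij} t) and u_j(t) = Σ_{l≠j} p_{jl} sin(ω_{jl} t) be piecewise-sinusoidal controls in ℝ³, where all frequencies ω_{ab} = ω_{ba} > 0 are pairwise distinct across distinct unordered pairs, and T > 0 is a common integer multiple of all periods 2π/ω_{ab}. Then for any fixed r ∈ ℝ³ \ {0} and any k ∈ ℕ, (1/T)·∫_{kT}^{kT+T} f(r, u_i(t), u_j(t)) dt = (1/2)·f(r, p_{ij}, p_{ji}). -/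
/-!
Since `fdip r` is bilinear, the average of `fdip r (u_i t) (u_j t)` over `[kT, kT + T]` is the
double sum over `l ≠ i`, `m ≠ j` of the averages of `sin (ω i l * t) * sin (ω j m * t)` times
`fdip r (p i l) (p j m)`. By the product-to-sum formula and because `T` is a period of every
`cos (c * t)` with `c = ω i l ± ω j m`, such an average vanishes unless `ω i l = ω j m`, and is
then `1 / 2`. Distinct unordered pairs carry distinct frequencies and `i ≠ j`, so this happens
only for `l = j`, `m = i`.
-/

noncomputable section

abbrev E3 := EuclideanSpace ℝ (Fin 3)

def dot3 (a b : E3) : ℝ := inner ℝ a b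

def cross3 (a b : E3) : E3 :=
  (WithLp.equiv 2 (Fin 3 → ℝ)).symm
    (crossProduct ((WithLp.equiv 2 (Fin 3 → ℝ)) a) ((WithLp.equiv 2 (Fin 3 → ℝ)) b))

def rhat (r : E3) : E3 := ‖r‖⁻¹ • r

def fdip (r u v : E3) : E3 :=
  dot3 v (rhat r) • u + dot3 u (rhat r) • v +
    (dot3 u v - 5 * dot3 u (rhat r) * dot3 v (rhat r)) • rhat r

open Real intervalIntegral

theorem integral_cos_mul_eq_zero {c T : ℝ} (hc : c ≠ 0) {z : ℤ} (hz : c * T = z * (2 * π))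
    (a : ℝ) : ∫ t in a..a + T, cos (c * t) = 0 := by
  have hend : c * (a + T) = c * a + z * (2 * π) := by rw [mul_add, hz]
  rw [integral_comp_mul_left cos hc, integral_cos, hend, sin_add_int_mul_two_pi, sub_self,
    smul_zero]

theorem integral_sin_mul_sin_eq_ite {ω₁ ω₂ T : ℝ} (hsum : ω₁ + ω₂ ≠ 0) {m₁ m₂ : ℤ}
    (h₁ : ω₁ * T = m₁ * (2 * π)) (h₂ : ω₂ * T = m₂ * (2 * π)) (a : ℝ) :
    ∫ t in a..a + T, sin (ω₁ * t) * sin (ω₂ * t) = if ω₁ = ω₂ then T / 2 else 0 := by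
  have hprod : ∀ t, sin (ω₁ * t) * sin (ω₂ * t) =
      (cos ((ω₁ - ω₂) * t) - cos ((ω₁ + ω₂) * t)) / 2 := fun t => by
    rw [sub_mul, add_mul, cos_sub, cos_add]; ring
  have hint : ∀ c : ℝ, IntervalIntegrable (fun t => cos (c * t))
      MeasureTheory.volume a (a + T) :=
    fun c => by apply Continuous.intervalIntegrable; fun_prop
  have hhigh : ∫ t in a..a + T, cos ((ω₁ + ω₂) * t) = 0 :=
    integral_cos_mul_eq_zero hsum (z := m₁ + m₂) (by push_cast; rw [add_mul, h₁, h₂]; ring) a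
  simp only [hprod, integral_div, integral_sub (hint _) (hint _), hhigh, sub_zero]
  split_ifs with heq
  · simp [heq]
  · rw [integral_cos_mul_eq_zero (sub_ne_zero.mpr heq) (z := m₁ - m₂)
      (by push_cast; rw [sub_mul, h₁, h₂]; ring) a, zero_div]

theorem intervalIntegral_bilin_sum_smul {ι κ E F G : Type*} [AddCommGroup E] [Module ℝ E]
    [AddCommGroup F] [Module ℝ F] [NormedAddCommGroup G] [NormedSpace ℝ G] [CompleteSpace G]
    (B : E →ₗ[ℝ] F →ₗ[ℝ] G) (s : Finset ι) (s' : Finset κ) (f : ι → ℝ → ℝ) (g : κ → ℝ → ℝ)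
    (u : ι → E) (v : κ → F) {a b : ℝ}
    (hfg : ∀ l ∈ s, ∀ m ∈ s',
      IntervalIntegrable (fun t => f l t * g m t) MeasureTheory.volume a b) :
    ∫ t in a..b, B (∑ l ∈ s, f l t • u l) (∑ m ∈ s', g m t • v m) =
      ∑ l ∈ s, ∑ m ∈ s', (∫ t in a..b, f l t * g m t) • B (u l) (v m) := by
  have hexpand : ∀ t, B (∑ l ∈ s, f l t • u l) (∑ m ∈ s', g m t • v m) =
      ∑ l ∈ s, ∑ m ∈ s', (f l t * g m t) • B (u l) (v m) := fun t => by
    simp only [map_sum, map_smul, LinearMap.sum_apply, LinearMap.smul_apply, Finset.smul_sum,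
      smul_smul, mul_comm]
    exact Finset.sum_comm
  have hint : ∀ l ∈ s, ∀ m ∈ s', IntervalIntegrable
      (fun t => (f l t * g m t) • B (u l) (v m)) MeasureTheory.volume a b :=
    fun l hl m hm => ⟨(hfg l hl m hm).1.smul_const _, (hfg l hl m hm).2.smul_const _⟩
  simp only [hexpand]
  rw [integral_finsetSum fun l hl => by
    simpa only [Finset.sum_fn] using IntervalIntegrable.sum s' (hint l hl)]
  refine Finset.sum_congr rfl fun l hl => ?_
  rw [integral_finsetSum (hint l hl)]
  exact Finset.sum_congr rfl fun m _ => integral_smul_const _ _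

def fdipBilin (r : E3) : E3 →ₗ[ℝ] E3 →ₗ[ℝ] E3 :=
  LinearMap.mk₂ ℝ (fdip r)
    (fun u₁ u₂ v => by
      simp only [fdip, dot3, inner_add_left]; module)
    (fun c u v => by
      simp only [fdip, dot3, real_inner_smul_left]; module)
    (fun u v₁ v₂ => by
      simp only [fdip, dot3, inner_add_left, inner_add_right]; module)
    (fun c u v => by
      simp only [fdip, dot3, real_inner_smul_left, real_inner_smul_right]; module)

theorem Finset.pair_eq_pair_of_ne {α : Type*} [DecidableEq α] {a b c d : α} (hac : a ≠ c)
    (h : ({a, b} : Finset α) = {c, d}) : b = c ∧ d = a := by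
  have ha : a ∈ ({c, d} : Finset α) := h ▸ Finset.mem_insert_self a {b}
  have hc : c ∈ ({a, b} : Finset α) := h ▸ Finset.mem_insert_self c {d}
  simp only [Finset.mem_insert, Finset.mem_singleton] at ha hc
  exact ⟨(hc.resolve_left hac.symm).symm, (ha.resolve_left hac).symm⟩

theorem mul_eq_natCast_mul_two_pi {ω T : ℝ} {m : ℕ} (hω : ω ≠ 0)
    (hT : T = m * (2 * π / ω)) : ω * T = (m : ℤ) * (2 * π) := by
  rw [hT]; push_cast; field_simp

theorem averaged_force_decoupling_general
    (n : ℕ) (i j : Fin n) (hij : i ≠ j)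
    (p : Fin n → Fin n → E3) (ω : Fin n → Fin n → ℝ)
    (hωpos : ∀ a b, a ≠ b → 0 < ω a b)
    (hωsymm : ∀ a b, ω a b = ω b a)
    (hωdistinct : ∀ a b c d, a ≠ b → c ≠ d →
      ({a, b} : Finset (Fin n)) ≠ {c, d} → ω a b ≠ ω c d)
    (T : ℝ) (hT : 0 < T)
    (hper : ∀ a b, a ≠ b → ∃ m : ℕ, 0 < m ∧ T = m * (2 * Real.pi / ω a b))
    (r : E3) (k : ℕ) :
    (1 / T) • (∫ t in (k * T)..(k * T + T),
        fdip r (∑ l ∈ Finset.univ.erase i, Real.sin (ω i l * t) • p i l)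
               (∑ l ∈ Finset.univ.erase j, Real.sin (ω j l * t) • p j l)) =
      (1 / 2 : ℝ) • fdip r (p i j) (p j i) := by
  have hmode : ∀ l ∈ Finset.univ.erase i, ∀ m ∈ Finset.univ.erase j,
      ∫ t in (k * T)..(k * T + T), sin (ω i l * t) * sin (ω j m * t) =
        if l = j ∧ m = i then T / 2 else 0 := by
    intro l hl m hm
    have hil := (Finset.ne_of_mem_erase hl).symm
    have hjm := (Finset.ne_of_mem_erase hm).symm
    obtain ⟨m₁, -, h₁⟩ := hper i l hil
    obtain ⟨m₂, -, h₂⟩ := hper j m hjm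
    rw [integral_sin_mul_sin_eq_ite (by linarith [hωpos i l hil, hωpos j m hjm])
      (mul_eq_natCast_mul_two_pi (hωpos i l hil).ne' h₁)
      (mul_eq_natCast_mul_two_pi (hωpos j m hjm).ne' h₂)]
    refine if_congr ⟨fun heq => ?_, fun ⟨hlj, hmi⟩ => by rw [hlj, hmi, hωsymm]⟩ rfl rfl
    exact Finset.pair_eq_pair_of_ne hij
      (by_contra fun hne => hωdistinct i l j m hil hjm hne heq)
  change (1 / T) • (∫ t in (k * T)..(k * T + T), fdipBilin r _ _) = _
  rw [intervalIntegral_bilin_sum_smul _ _ _ _ _ _ _ fun l _ m _ => by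
      apply Continuous.intervalIntegrable; fun_prop,
    Finset.sum_congr rfl fun l hl => Finset.sum_congr rfl fun m hm => by rw [hmode l hl m hm]]
  simp only [ite_and, ite_smul, zero_smul, Finset.sum_ite_irrel, Finset.sum_const_zero,
    Finset.sum_ite_eq', Finset.mem_erase, ne_eq, hij, Ne.symm hij, not_false_eq_true,
    Finset.mem_univ, and_true, if_true, smul_smul]
  congr 1
  field_simp

theorem averaged_force_decoupling
    (n : ℕ) (i j : Fin n) (hij : i ≠ j)
    (p : Fin n → Fin n → E3) (ω : Fin n → Fin n → ℝ)
    (hωpos : ∀ a b, a ≠ b → 0 < ω a b)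
    (hωsymm : ∀ a b, ω a b = ω b a)
    (hωdistinct : ∀ a b c d, a ≠ b → c ≠ d →
      ({a, b} : Finset (Fin n)) ≠ {c, d} → ω a b ≠ ω c d)
    (T : ℝ) (hT : 0 < T)
    (hper : ∀ a b, a ≠ b → ∃ m : ℕ, 0 < m ∧ T = m * (2 * Real.pi / ω a b))
    (r : E3) (hr : r ≠ 0) (k : ℕ) :
    (1 / T) • (∫ t in (k * T)..(k * T + T),
        fdip r (∑ l ∈ Finset.univ.erase i, Real.sin (ω i l * t) • p i l)
               (∑ l ∈ Finset.univ.erase j, Real.sin (ω j l * t) • p j l)) =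
      (1 / 2 : ℝ) • fdip r (p i j) (p j i) :=
  averaged_force_decoupling_general n i j hij p ω hωpos hωsymm hωdistinct T hT hper r k
end
end

section
/- Define, for r, f* ∈ ℝ³ with r ≠ 0: Φ₁ = √(|r × f*|² + |r|²|f*|²), Φ₂ = (2 − sgn(r·f*)²)Φ₁, g_r = −(sgn(r·f*)/2)·√((|r·f*| + Φ₁)/|r|), g_rf = (1/√2)·√((−|r·f*| + Φ₂)/|r|), h_r = (1/2)·√((|r·f*| + Φ₂)/|r|), h_rf = −(sgn(r·f*)/√2)·√((−|r·f*| + Φ₁)/|r|), and g(r,f*) = (g_r/|r|)r + (g_rf/(|r||r×f*|))((r×f*)×r), h(r,f*) = (h_r/|r|)r + (h_rf/(|r||r×f*|))((r×f*)×r) when r×f* ≠ 0, and g = (g_r/|r|)r, h = (h_r/|r|)r when r×f* = 0. Then f(r, g(r,f*), h(r,f*)) = f*, where f(r,u,v) = (v·r̂)u + (u·r̂)v + [(u·v) − 5(u·r̂)(v·r̂)]r̂, r̂ = r/|r|. -/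
open scoped Classical

noncomputable section

def Phi1 (r c : E3) : ℝ := Real.sqrt (‖cross3 r c‖ ^ 2 + ‖r‖ ^ 2 * ‖c‖ ^ 2)

def Phi2 (r c : E3) : ℝ := (2 - Real.sign (dot3 r c) ^ 2) * Phi1 r c

def gr (r c : E3) : ℝ :=
  -(Real.sign (dot3 r c) / 2) * Real.sqrt ((|dot3 r c| + Phi1 r c) / ‖r‖)

def grf (r c : E3) : ℝ :=
  (1 / Real.sqrt 2) * Real.sqrt ((-|dot3 r c| + Phi2 r c) / ‖r‖)

def hr (r c : E3) : ℝ :=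
  (1 / 2) * Real.sqrt ((|dot3 r c| + Phi2 r c) / ‖r‖)

def hrf (r c : E3) : ℝ :=
  -(Real.sign (dot3 r c) / Real.sqrt 2) * Real.sqrt ((-|dot3 r c| + Phi1 r c) / ‖r‖)

def gvec (r c : E3) : E3 :=
  if cross3 r c ≠ 0 then
    (gr r c / ‖r‖) • r + (grf r c / (‖r‖ * ‖cross3 r c‖)) • cross3 (cross3 r c) r
  else
    (gr r c / ‖r‖) • r

def hvec (r c : E3) : E3 :=
  if cross3 r c ≠ 0 then
    (hr r c / ‖r‖) • r + (hrf r c / (‖r‖ * ‖cross3 r c‖)) • cross3 (cross3 r c) r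
  else
    (hr r c / ‖r‖) • r

/-!
Let `ê` be the unit vector along `(r × f*) × r`, orthogonal to `r`. In the frame `(r̂, ê)` the
dipole force of `u = a r̂ + b ê` and `v = a' r̂ + b' ê` is `(b b' - 2 a a') r̂ + (a' b + a b') ê`,
while `f* = ((r·f*)/|r|) r̂ + (|r × f*|/|r|) ê`, so the amplitudes only have to solve a 2 × 2
system. For `r·f* ≠ 0` put `A² = (Φ₁ - |r·f*|)/|r|` and `B² = (Φ₁ + |r·f*|)/|r|`; then
`B² - A² = 2|r·f*|/|r|`, and Lagrange's identity `|r × f*|² = |r|²|f*|² - (r·f*)²` gives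
`Φ₁² = 2|r × f*|² + (r·f*)²`, hence `AB = √2 |r × f*|/|r|`. For `r·f* = 0` the sign factor kills
`g_r` and `h_rf`, and `Φ₂ = 2Φ₁ = 2√2 |r × f*|` balances the remaining product `h_r g_rf`.
-/

lemma Real.sign_mul_abs (x : ℝ) : Real.sign x * |x| = x := by
  rcases lt_trichotomy x 0 with hx | rfl | hx
  · rw [Real.sign_of_neg hx, abs_of_neg hx]; ring
  · simp
  · rw [Real.sign_of_pos hx, abs_of_pos hx]; ring

lemma Real.sign_sq_of_ne_zero {x : ℝ} (hx : x ≠ 0) : Real.sign x ^ 2 = 1 := by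
  rcases Real.sign_apply_eq_of_ne_zero x hx with h | h <;> simp [h]

lemma cross3_zero_left (r : E3) : cross3 0 r = 0 := by
  simp [cross3]

lemma ne_zero_of_cross3_ne_zero {r c : E3} (h : cross3 r c ≠ 0) : r ≠ 0 := by
  rintro rfl
  simp [cross3] at h

lemma norm_cross3_sq (r c : E3) : ‖cross3 r c‖ ^ 2 = ‖r‖ ^ 2 * ‖c‖ ^ 2 - dot3 r c ^ 2 := by
  simp only [EuclideanSpace.norm_sq_eq, Real.norm_eq_abs, sq_abs, Fin.sum_univ_three, dot3,
    PiLp.inner_apply, RCLike.inner_apply, conj_trivial, cross3, cross_apply, WithLp.equiv_apply,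
    WithLp.equiv_symm_apply, Fin.isValue, Matrix.cons_val_zero, Matrix.cons_val_one,
    Matrix.cons_val]
  ring

lemma cross3_cross3_self (r c : E3) :
    cross3 (cross3 r c) r = ‖r‖ ^ 2 • c - dot3 r c • r := by
  ext i
  fin_cases i <;>
    simp [cross3, cross_apply, dot3, PiLp.inner_apply, EuclideanSpace.norm_sq_eq,
      Fin.sum_univ_three] <;> ring

-- `0` when `r × c = 0`, which makes `gvec_eq` and `hvec_eq` hold without a case split.
def perpUnit (r c : E3) : E3 := (‖r‖ * ‖cross3 r c‖)⁻¹ • cross3 (cross3 r c) r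

lemma perpUnit_of_cross3_eq_zero {r c : E3} (h : cross3 r c = 0) : perpUnit r c = 0 := by
  simp [perpUnit, h, cross3_zero_left]

lemma dot3_perpUnit (r c : E3) : dot3 r (perpUnit r c) = 0 := by
  simp only [perpUnit, cross3_cross3_self, dot3, inner_smul_right, inner_sub_right,
    real_inner_self_eq_norm_sq]
  ring

lemma norm_perpUnit_sq {r c : E3} (h : cross3 r c ≠ 0) : ‖perpUnit r c‖ ^ 2 = 1 := by
  have hr0 := ne_zero_of_cross3_ne_zero h
  have hnorm : ‖cross3 (cross3 r c) r‖ ^ 2 = (‖r‖ * ‖cross3 r c‖) ^ 2 := by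
    rw [mul_pow ‖r‖, norm_cross3_sq r c, cross3_cross3_self, norm_sub_sq_real, norm_smul, norm_smul,
      inner_smul_left, inner_smul_right, real_inner_comm]
    simp only [dot3, Real.norm_eq_abs, abs_pow, abs_norm, mul_pow, sq_abs, conj_trivial]
    ring
  rw [perpUnit, norm_smul, mul_pow, hnorm, norm_inv, inv_pow, Real.norm_eq_abs, sq_abs]
  exact inv_mul_cancel₀ (by positivity)

lemma smul_perpUnit (r c : E3) :
    (‖cross3 r c‖ / ‖r‖) • perpUnit r c = (‖r‖ ^ 2)⁻¹ • cross3 (cross3 r c) r := by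
  by_cases h : cross3 r c = 0
  · simp [perpUnit, h, cross3_zero_left]
  · have hr0 := ne_zero_of_cross3_ne_zero h
    rw [perpUnit, smul_smul]
    congr 1
    field_simp

lemma eq_smul_rhat_add_smul_perpUnit {r : E3} (hr0 : r ≠ 0) (c : E3) :
    (dot3 r c / ‖r‖) • rhat r + (‖cross3 r c‖ / ‖r‖) • perpUnit r c = c := by
  rw [smul_perpUnit, cross3_cross3_self, rhat, smul_smul, smul_sub, smul_smul, smul_smul,
    add_sub_left_comm]
  have hR : ‖r‖ ≠ 0 := norm_ne_zero_iff.mpr hr0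
  match_scalars
  all_goals field_simp
  all_goals ring

lemma gvec_eq (r c : E3) : gvec r c = gr r c • rhat r + grf r c • perpUnit r c := by
  by_cases h : cross3 r c = 0
  · simp [gvec, h, perpUnit_of_cross3_eq_zero, rhat, smul_smul, div_eq_mul_inv]
  · simp [gvec, h, perpUnit, rhat, smul_smul, div_eq_mul_inv]

lemma hvec_eq (r c : E3) : hvec r c = hr r c • rhat r + hrf r c • perpUnit r c := by
  by_cases h : cross3 r c = 0
  · simp [hvec, h, perpUnit_of_cross3_eq_zero, rhat, smul_smul, div_eq_mul_inv]
  · simp [hvec, h, perpUnit, rhat, smul_smul, div_eq_mul_inv]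

lemma fdip_smul_rhat_add_smul {r w : E3} (hr0 : r ≠ 0) (hw : dot3 r w = 0) (a b a' b' : ℝ) :
    fdip r (a • rhat r + b • w) (a' • rhat r + b' • w) =
      (b * b' * ‖w‖ ^ 2 - 2 * a * a') • rhat r + (a' * b + a * b') • w := by
  have hrr : inner ℝ (rhat r) (rhat r) = 1 := by
    rw [real_inner_self_eq_norm_sq, rhat, norm_smul, norm_inv, norm_norm,
      inv_mul_cancel₀ (norm_ne_zero_iff.mpr hr0), one_pow]
  have hwr : inner ℝ w (rhat r) = 0 := by
    rw [rhat, inner_smul_right, real_inner_comm, ← dot3, hw, mul_zero]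
  have hrw : inner ℝ (rhat r) w = 0 := by rw [real_inner_comm, hwr]
  simp only [fdip, dot3, inner_add_left, inner_add_right, inner_smul_left, inner_smul_right,
    hrr, hwr, hrw, real_inner_self_eq_norm_sq, conj_trivial]
  match_scalars <;> ring

lemma Phi1_eq (r c : E3) : Phi1 r c = √(2 * ‖cross3 r c‖ ^ 2 + dot3 r c ^ 2) := by
  rw [Phi1, norm_cross3_sq]
  congr 1
  ring

lemma abs_dot3_le_Phi1 (r c : E3) : |dot3 r c| ≤ Phi1 r c := by
  rw [Phi1_eq, ← Real.sqrt_sq_eq_abs]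
  exact Real.sqrt_le_sqrt (le_add_of_nonneg_left (by positivity))

lemma Phi2_of_dot3_ne_zero {r c : E3} (h : dot3 r c ≠ 0) : Phi2 r c = Phi1 r c := by
  rw [Phi2, Real.sign_sq_of_ne_zero h]
  ring

lemma grf_mul_hrf_sub_two_mul_gr_mul_hr {r : E3} (hr0 : r ≠ 0) (c : E3) :
    grf r c * hrf r c - 2 * gr r c * hr r c = dot3 r c / ‖r‖ := by
  by_cases hd : dot3 r c = 0
  · simp [gr, hrf, hd]
  have hR : 0 < ‖r‖ := norm_pos_iff.mpr hr0
  have hP := abs_dot3_le_Phi1 r c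
  have hA : √((-|dot3 r c| + Phi1 r c) / ‖r‖) ^ 2 = (-|dot3 r c| + Phi1 r c) / ‖r‖ :=
    Real.sq_sqrt (div_nonneg (by linarith) hR.le)
  have hB : √((|dot3 r c| + Phi1 r c) / ‖r‖) ^ 2 = (|dot3 r c| + Phi1 r c) / ‖r‖ :=
    Real.sq_sqrt (div_nonneg (by linarith [abs_nonneg (dot3 r c)]) hR.le)
  have h2 : √(2 : ℝ) ^ 2 = 2 := Real.sq_sqrt zero_le_two
  rw [grf, hrf, gr, hr, Phi2_of_dot3_ne_zero hd]
  field_simp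
  rw [hA, hB, h2]
  field_simp
  linear_combination 2 * Real.sign_mul_abs (dot3 r c)

lemma hr_mul_grf_add_gr_mul_hrf {r : E3} (hr0 : r ≠ 0) (c : E3) :
    hr r c * grf r c + gr r c * hrf r c = ‖cross3 r c‖ / ‖r‖ := by
  have hR : 0 < ‖r‖ := norm_pos_iff.mpr hr0
  have hP := abs_dot3_le_Phi1 r c
  by_cases hd : dot3 r c = 0
  · have hP1 : Phi1 r c = √2 * ‖cross3 r c‖ := by
      rw [Phi1_eq, hd, zero_pow two_ne_zero, add_zero, Real.sqrt_mul zero_le_two,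
        Real.sqrt_sq (norm_nonneg _)]
    have hC : √(2 * Phi1 r c / ‖r‖) ^ 2 = 2 * Phi1 r c / ‖r‖ :=
      Real.sq_sqrt (div_nonneg (by linarith [abs_nonneg (dot3 r c)]) hR.le)
    calc hr r c * grf r c + gr r c * hrf r c = √(2 * Phi1 r c / ‖r‖) ^ 2 / (2 * √2) := by
          simp only [hr, grf, gr, Phi2, hd, Real.sign_zero, abs_zero]
          ring_nf
      _ = ‖cross3 r c‖ / ‖r‖ := by
          rw [hC, hP1]
          field_simp
  have hPsq : Phi1 r c ^ 2 = 2 * ‖cross3 r c‖ ^ 2 + dot3 r c ^ 2 := by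
    rw [Phi1_eq, Real.sq_sqrt (by positivity)]
  calc hr r c * grf r c + gr r c * hrf r c
        = √((-|dot3 r c| + Phi1 r c) / ‖r‖) * √((|dot3 r c| + Phi1 r c) / ‖r‖) / √2 := by
          rw [hr, grf, gr, hrf, Phi2_of_dot3_ne_zero hd]
          field_simp
          rw [Real.sign_sq_of_ne_zero hd]
          ring
    _ = √(2 * ‖cross3 r c‖ ^ 2 / ‖r‖ ^ 2) / √2 := by
          rw [← Real.sqrt_mul (div_nonneg (by linarith) hR.le)]
          congr 2
          field_simp
          linear_combination hPsq - sq_abs (dot3 r c)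
    _ = ‖cross3 r c‖ / ‖r‖ := by
          rw [Real.sqrt_div' _ (sq_nonneg _), Real.sqrt_mul zero_le_two, Real.sqrt_sq (norm_nonneg _),
            Real.sqrt_sq (norm_nonneg _)]
          field_simp

lemma hrf_mul_norm_perpUnit_sq (r c : E3) : hrf r c * ‖perpUnit r c‖ ^ 2 = hrf r c := by
  by_cases h : cross3 r c = 0
  · have hP : Phi1 r c = |dot3 r c| := by
      rw [Phi1_eq, h, norm_zero, zero_pow two_ne_zero, mul_zero, zero_add, Real.sqrt_sq_eq_abs]
    simp [hrf, hP]
  · rw [norm_perpUnit_sq h, mul_one]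

theorem amplitude_allocation_realizes_force (r fstar : E3) (hrne : r ≠ 0) :
    fdip r (gvec r fstar) (hvec r fstar) = fstar := by
  rw [gvec_eq, hvec_eq, fdip_smul_rhat_add_smul hrne (dot3_perpUnit r fstar),
    mul_assoc (grf r fstar), hrf_mul_norm_perpUnit_sq,
    grf_mul_hrf_sub_two_mul_gr_mul_hr hrne, hr_mul_grf_add_gr_mul_hrf hrne]
  exact eq_smul_rhat_add_smul_perpUnit hrne fstar
end
end
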